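/- For any sample (X_1,...,X_n) of partitions, F_n(M) = f_n(𝔛) whenever 𝔛 = (X̂_1,...,X̂_n) is a global minimizer of f_n(𝔛') = (1/n)∑_i ‖X̂'_i − M_{𝔛'}‖² and M = π(M_𝔛); that is, the minimal value of the alignment variance equals the Fréchet function value at the induced partition. -/

import Mathlib

/-!
Let `M` be the mean of a minimising alignment `A`. The variance of any alignment `B` is at most
`(1/n) ∑ ‖B i - M‖²`, since the mean of a family minimises its sum of squared distances, with
equality for `B = A`. So replacing `A i` by another representative `Z` of `X i` cannot make it
closer to `M`: `A i` is an optimal alignment of `X i` to `M`, whence `δ(X i, π M) = ‖A i - M‖`.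
-/

open Finset

noncomputable section

def LP (l m : ℕ) : Set (Matrix (Fin l) (Fin m) ℝ) :=
  {X | (∀ k j, X k j ∈ Set.Icc (0:ℝ) 1) ∧ ∀ j, ∑ k, X k j = 1}

def act {l m : ℕ} (σ : Equiv.Perm (Fin l)) (X : Matrix (Fin l) (Fin m) ℝ) :
    Matrix (Fin l) (Fin m) ℝ :=
  fun k j => X (σ⁻¹ k) j

def orbit {l m : ℕ} (X : Matrix (Fin l) (Fin m) ℝ) : Set (Matrix (Fin l) (Fin m) ℝ) :=
  {Y | ∃ σ : Equiv.Perm (Fin l), act σ X = Y}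

def finner {l m : ℕ} (A B : Matrix (Fin l) (Fin m) ℝ) : ℝ :=
  ∑ k, ∑ j, A k j * B k j

def fnorm {l m : ℕ} (A : Matrix (Fin l) (Fin m) ℝ) : ℝ :=
  Real.sqrt (finner A A)

def pdist {l m : ℕ} (A B : Set (Matrix (Fin l) (Fin m) ℝ)) : ℝ :=
  sInf {d | ∃ X ∈ A, ∃ Y ∈ B, d = fnorm (X - Y)}

theorem sum_sq_sub_eq_sum_sq_sub_mean_add {ι : Type*} (s : Finset ι) (x : ι → ℝ) (c : ℝ) :
    ∑ i ∈ s, (x i - c) ^ 2 =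
      ∑ i ∈ s, (x i - (#s : ℝ)⁻¹ * ∑ j ∈ s, x j) ^ 2 +
        #s * ((#s : ℝ)⁻¹ * ∑ j ∈ s, x j - c) ^ 2 := by
  rcases s.eq_empty_or_nonempty with rfl | hs
  · simp
  set μ := (#s : ℝ)⁻¹ * ∑ j ∈ s, x j
  have hcard_mul_mean : (#s : ℝ) * μ = ∑ j ∈ s, x j := by
    have : (#s : ℝ) ≠ 0 := by exact_mod_cast hs.card_ne_zero
    exact mul_inv_cancel_left₀ this _
  have hdev : ∑ i ∈ s, (x i - μ) = 0 := by
    rw [sum_sub_distrib, sum_const, nsmul_eq_mul, hcard_mul_mean, sub_self]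
  calc ∑ i ∈ s, (x i - c) ^ 2
      = ∑ i ∈ s, ((x i - μ) ^ 2 + 2 * (μ - c) * (x i - μ) + (μ - c) ^ 2) :=
        sum_congr rfl fun _ _ => by ring
    _ = ∑ i ∈ s, (x i - μ) ^ 2 + #s * (μ - c) ^ 2 := by
        rw [sum_add_distrib, sum_add_distrib, ← mul_sum, hdev, sum_const, nsmul_eq_mul]
        ring

theorem sum_sq_sub_mean_le {ι : Type*} (s : Finset ι) (x : ι → ℝ) (c : ℝ) :
    ∑ i ∈ s, (x i - (#s : ℝ)⁻¹ * ∑ j ∈ s, x j) ^ 2 ≤ ∑ i ∈ s, (x i - c) ^ 2 := by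
  rw [sum_sq_sub_eq_sum_sq_sub_mean_add s x c]
  exact le_add_of_nonneg_right (by positivity)

variable {l m : ℕ}

theorem fnorm_nonneg (A : Matrix (Fin l) (Fin m) ℝ) : 0 ≤ fnorm A :=
  Real.sqrt_nonneg _

theorem fnorm_sq (A : Matrix (Fin l) (Fin m) ℝ) : fnorm A ^ 2 = ∑ k, ∑ j, A k j ^ 2 := by
  have hnonneg : 0 ≤ finner A A := sum_nonneg fun k _ => sum_nonneg fun j _ => mul_self_nonneg _
  rw [fnorm, Real.sq_sqrt hnonneg, finner]
  simp only [sq]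

theorem act_one (X : Matrix (Fin l) (Fin m) ℝ) : act 1 X = X :=
  rfl

theorem act_mul (σ τ : Equiv.Perm (Fin l)) (X : Matrix (Fin l) (Fin m) ℝ) :
    act σ (act τ X) = act (σ * τ) X :=
  rfl

theorem act_sub (σ : Equiv.Perm (Fin l)) (X Y : Matrix (Fin l) (Fin m) ℝ) :
    act σ (X - Y) = act σ X - act σ Y :=
  rfl

theorem fnorm_act (σ : Equiv.Perm (Fin l)) (X : Matrix (Fin l) (Fin m) ℝ) :
    fnorm (act σ X) = fnorm X := by
  unfold fnorm finner act
  rw [Equiv.sum_comp σ⁻¹ fun k => ∑ j, X k j * X k j]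

theorem fnorm_act_sub_act (σ τ : Equiv.Perm (Fin l)) (X Y : Matrix (Fin l) (Fin m) ℝ) :
    fnorm (act σ X - act τ Y) = fnorm (act (τ⁻¹ * σ) X - Y) := by
  rw [← fnorm_act τ⁻¹, act_sub, act_mul, act_mul, inv_mul_cancel, act_one]

theorem pdist_orbit_eq_of_forall_le {X Y Z : Matrix (Fin l) (Fin m) ℝ} (hZ : Z ∈ orbit X)
    (hopt : ∀ Z' ∈ orbit X, fnorm (Z - Y) ≤ fnorm (Z' - Y)) :
    pdist (orbit X) (orbit Y) = fnorm (Z - Y) := by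
  refine IsLeast.csInf_eq ⟨⟨Z, hZ, Y, ⟨1, act_one Y⟩, rfl⟩, ?_⟩
  rintro _ ⟨_, ⟨σ, rfl⟩, _, ⟨τ, rfl⟩, rfl⟩
  rw [fnorm_act_sub_act]
  exact hopt _ ⟨_, rfl⟩

theorem sum_fnorm_sq_sub_mean_le {ι : Type*} [Fintype ι] (B : ι → Matrix (Fin l) (Fin m) ℝ)
    (C : Matrix (Fin l) (Fin m) ℝ) :
    ∑ i, fnorm (B i - (Fintype.card ι : ℝ)⁻¹ • ∑ j, B j) ^ 2 ≤ ∑ i, fnorm (B i - C) ^ 2 := by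
  simp only [fnorm_sq, Matrix.sub_apply, Matrix.smul_apply, Matrix.sum_apply, smul_eq_mul]
  rw [sum_comm, sum_comm (s := univ) (t := univ) (γ := ι)]
  refine sum_le_sum fun k _ => ?_
  rw [sum_comm, sum_comm (s := univ) (t := univ) (γ := ι)]
  exact sum_le_sum fun j _ => sum_sq_sub_mean_le univ (fun i => B i k j) (C k j)

def alignmentMean {n : ℕ} (A : Fin n → Matrix (Fin l) (Fin m) ℝ) : Matrix (Fin l) (Fin m) ℝ :=
  (n : ℝ)⁻¹ • ∑ j, A j

def alignmentVariance {n : ℕ} (A : Fin n → Matrix (Fin l) (Fin m) ℝ) : ℝ :=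
  (n : ℝ)⁻¹ * ∑ i, fnorm (A i - alignmentMean A) ^ 2

theorem alignmentVariance_le_mean_sum_fnorm_sq {n : ℕ} (B : Fin n → Matrix (Fin l) (Fin m) ℝ)
    (C : Matrix (Fin l) (Fin m) ℝ) :
    alignmentVariance B ≤ (n : ℝ)⁻¹ * ∑ i, fnorm (B i - C) ^ 2 := by
  have := sum_fnorm_sq_sub_mean_le B C
  rw [Fintype.card_fin] at this
  exact mul_le_mul_of_nonneg_left this (by positivity)

theorem fnorm_sub_alignmentMean_le_of_forall_le {n : ℕ} {X A : Fin n → Matrix (Fin l) (Fin m) ℝ}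
    (hA : ∀ i, A i ∈ orbit (X i))
    (hmin : ∀ B, (∀ i, B i ∈ orbit (X i)) → alignmentVariance A ≤ alignmentVariance B)
    (i : Fin n) {Z : Matrix (Fin l) (Fin m) ℝ} (hZ : Z ∈ orbit (X i)) :
    fnorm (A i - alignmentMean A) ≤ fnorm (Z - alignmentMean A) := by
  set M := alignmentMean A
  have hB : ∀ k, Function.update A i Z k ∈ orbit (X k) := by
    intro k
    rcases eq_or_ne k i with rfl | hk
    · simpa using hZ
    · simpa [hk] using hA k
  have hinv : (0 : ℝ) < (n : ℝ)⁻¹ := by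
    have := i.pos
    positivity
  have hsum : ∑ k, fnorm (A k - M) ^ 2 ≤ ∑ k, fnorm (Function.update A i Z k - M) ^ 2 :=
    le_of_mul_le_mul_left
      ((hmin _ hB).trans (alignmentVariance_le_mean_sum_fnorm_sq _ M)) hinv
  simp only [Function.apply_update (fun _ W => fnorm (W - M) ^ 2)] at hsum
  rw [sum_update_of_mem (mem_univ i), sum_eq_add_sum_sdiff_singleton_of_mem (mem_univ i)] at hsum
  exact (pow_le_pow_iff_left₀ (fnorm_nonneg _) (fnorm_nonneg _) two_ne_zero).mp (by linarith)

theorem frechet_value_eq_min_alignment_variance_general (l m n : ℕ)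
    (X : Fin n → Matrix (Fin l) (Fin m) ℝ)
    (A : Fin n → Matrix (Fin l) (Fin m) ℝ) (hA : ∀ i, A i ∈ orbit (X i))
    (hmin : ∀ B : Fin n → Matrix (Fin l) (Fin m) ℝ, (∀ i, B i ∈ orbit (X i)) →
      (n : ℝ)⁻¹ * ∑ i, (fnorm (A i - (n : ℝ)⁻¹ • ∑ j, A j)) ^ 2 ≤
      (n : ℝ)⁻¹ * ∑ i, (fnorm (B i - (n : ℝ)⁻¹ • ∑ j, B j)) ^ 2) :
    (n : ℝ)⁻¹ * ∑ i, (pdist (orbit (X i)) (orbit ((n : ℝ)⁻¹ • ∑ j, A j))) ^ 2 =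
    (n : ℝ)⁻¹ * ∑ i, (fnorm (A i - (n : ℝ)⁻¹ • ∑ j, A j)) ^ 2 := by
  have hopt : ∀ i, pdist (orbit (X i)) (orbit (alignmentMean A)) = fnorm (A i - alignmentMean A) :=
    fun i => pdist_orbit_eq_of_forall_le (hA i) fun _ hZ =>
      fnorm_sub_alignmentMean_le_of_forall_le hA hmin i hZ
  exact congrArg _ (sum_congr rfl fun i _ => congrArg (· ^ 2) (hopt i))

theorem frechet_value_eq_min_alignment_variance (l m n : ℕ) (hn : 0 < n)
    (X : Fin n → Matrix (Fin l) (Fin m) ℝ) (hX : ∀ i, X i ∈ LP l m)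
    (A : Fin n → Matrix (Fin l) (Fin m) ℝ) (hA : ∀ i, A i ∈ orbit (X i))
    (hmin : ∀ B : Fin n → Matrix (Fin l) (Fin m) ℝ, (∀ i, B i ∈ orbit (X i)) →
      (n : ℝ)⁻¹ * ∑ i, (fnorm (A i - (n : ℝ)⁻¹ • ∑ j, A j)) ^ 2 ≤
      (n : ℝ)⁻¹ * ∑ i, (fnorm (B i - (n : ℝ)⁻¹ • ∑ j, B j)) ^ 2) :
    (n : ℝ)⁻¹ * ∑ i, (pdist (orbit (X i)) (orbit ((n : ℝ)⁻¹ • ∑ j, A j))) ^ 2 =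
    (n : ℝ)⁻¹ * ∑ i, (fnorm (A i - (n : ℝ)⁻¹ • ∑ j, A j)) ^ 2 :=
  frechet_value_eq_min_alignment_variance_general l m n X A hA hmin
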